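/- arXiv:2002.04818 — 2 statements merged into one kernel-verified Lean document; each statement's English description precedes it below -/
import Mathlib

section
/- The Waring rank of the defining polynomial of a generic arrangement A ⊂ P^n with at least n+1 hyperplanes is at least min{C(|A|, n), C(2n, n)}, where C(a,b) denotes the binomial coefficient. -/
/-!
Write `f = ∏ ℓⱼ = ∑ cₘ Lₘ ^ r` and `d = min (r - n) n`. Pick a point `p` lying on exactly the
hyperplanes `ℓⱼ`, `j ∈ U`, for a set `U` of `d` indices (general position and an infinite field make
this possible). Expanding `f (x + t • p)` and taking the coefficient of `t ^ (r - d)` shows that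
`∏_{j ∈ U} ℓⱼ` lies in the span `W` of the `Lₘ ^ d`. Any `n + 1` of the `ℓⱼ` span all linear
forms, so the factors can be replaced one at a time by arbitrary variables: every monomial of
degree `d` lies in `W`, whence `k ≥ C(n + d, n) ≥ min (C(r, n)) (C(2n, n))`.
-/

open MvPolynomial

/-- The apolar action: `apol Φ f = Φ(∂/∂x₀,…,∂/∂xₙ) f`. -/
noncomputable def apol {σ K : Type*} [CommRing K] (Φ f : MvPolynomial σ K) :
    MvPolynomial σ K :=
  (AddMonoidAlgebra.coeff Φ).sum fun m c =>
    (AddMonoidAlgebra.coeff f).sum fun n b =>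
      if ∀ i ∈ m.support, m i ≤ n i then
        monomial (n - m) (c * b * ∏ i ∈ m.support, (Nat.descFactorial (n i) (m i) : K))
      else 0

open Module Submodule Set

theorem Module.exists_dual_le_ker_forall_ne_zero {K V ι : Type*} [Field K] [Infinite K]
    [AddCommGroup V] [Module K V] [Finite ι] {W : Submodule K V} {x : ι → V}
    (hx : ∀ i, x i ∉ W) : ∃ f : Dual K V, W ≤ LinearMap.ker f ∧ ∀ i, f (x i) ≠ 0 := by
  set A := W.dualAnnihilator
  have hH : ∀ i, LinearMap.ker ((Dual.eval K V (x i)).domRestrict A) ≠ ⊤ := by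
    intro i hi
    obtain ⟨f, hfx, hfW⟩ := W.exists_dual_map_eq_bot_of_notMem (hx i) inferInstance
    have hf : f ∈ A :=
      (mem_dualAnnihilator f).mpr (LinearMap.le_ker_iff_map.mpr hfW)
    exact hfx (eq_top_iff'.mp hi ⟨f, hf⟩)
  obtain ⟨f, hf⟩ : ∃ f : A, ∀ i, f ∉ LinearMap.ker ((Dual.eval K V (x i)).domRestrict A) := by
    by_contra! h
    obtain ⟨i, hi⟩ := Subspace.exists_eq_top_of_iUnion_eq_univ
      (eq_univ_of_forall fun f => mem_iUnion.mpr (h f))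
    exact hH i hi
  exact ⟨f, fun v hv => (mem_dualAnnihilator _).mp f.2 v hv, hf⟩

theorem exists_dotProduct_eq_zero_and_ne_zero {K σ ι : Type*} [Field K] [Infinite K] [Fintype σ]
    [Finite ι] {a : ι → σ → K} {U : Set ι} (h : ∀ j ∉ U, a j ∉ span K (a '' U)) :
    ∃ p : σ → K, (∀ j ∈ U, a j ⬝ᵥ p = 0) ∧ ∀ j ∉ U, a j ⬝ᵥ p ≠ 0 := by
  classical
  obtain ⟨f, hU, hUc⟩ := exists_dual_le_ker_forall_ne_zero (x := fun j : {j // j ∉ U} => a j)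
    fun j => h j j.2
  have hf : ∀ v, v ⬝ᵥ (dotProductEquiv K σ).symm f = f v := fun v => by
    rw [dotProduct_comm, ← dotProductEquiv_apply_apply, LinearEquiv.apply_symm_apply]
  refine ⟨(dotProductEquiv K σ).symm f, fun j hj => ?_, fun j hj => ?_⟩
  · rw [hf]
    exact hU (subset_span (mem_image_of_mem a hj))
  · rw [hf]
    exact hUc ⟨j, hj⟩

section GeneralPosition

variable {K V ι : Type*} [Field K] [AddCommGroup V] [Module K V] {a : ι → V}

theorem notMem_span_image_of_card_lt [DecidableEq ι]
    (ha : ∀ s : Finset ι, finrank K (span K (a '' s)) = min s.card (finrank K V))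
    {U : Finset ι} (hU : U.card < finrank K V) {j : ι} (hj : j ∉ U) :
    a j ∉ span K (a '' U) := by
  intro hmem
  have hins := ha (insert j U)
  rw [Finset.coe_insert, image_insert_eq, span_insert_eq_span hmem, ha U,
    Finset.card_insert_of_notMem hj] at hins
  omega

theorem span_image_eq_top_of_le_card [FiniteDimensional K V]
    (ha : ∀ s : Finset ι, finrank K (span K (a '' s)) = min s.card (finrank K V))
    {T : Finset ι} (hT : finrank K V ≤ T.card) : span K (a '' T) = ⊤ :=
  eq_top_of_finrank_eq (by rw [ha, min_eq_right hT])

end GeneralPosition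

namespace Polynomial

variable {K A : Type*} [CommSemiring K] [CommSemiring A] [Algebra K A]

theorem coeff_C_add_smul_X_pow (L : A) (w : K) (N e : ℕ) :
    ((C L + w • X) ^ N).coeff e = (N.choose e * w ^ e) • L ^ (N - e) := by
  have hcomp : C L + w • X = (X + C L).comp (C (algebraMap K A w) * X) := by
    simp [Algebra.smul_def, add_comm]
  rw [hcomp, ← pow_comp, comp_C_mul_X_coeff, coeff_X_add_C_pow, Algebra.smul_def]
  simp only [map_mul, map_natCast, map_pow]
  ring

theorem coeff_prod_C_add_smul_X {ι : Type*} (s : Finset ι) (L : ι → A) (w : ι → K) :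
    (∏ j ∈ s, (C (L j) + w j • X)).coeff s.card = algebraMap K A (∏ j ∈ s, w j) := by
  rw [← mul_one s.card,
    coeff_prod_of_natDegree_le (s := s) (fun j => C (L j) + w j • X) 1 fun j _ => ?_, map_prod]
  · simp [Algebra.smul_def]
  · rw [Algebra.smul_def, algebraMap_apply, add_comm]
    exact natDegree_linear_le

end Polynomial

section LinearForm

variable {K σ : Type*} [CommSemiring K]

noncomputable def linearForm [Fintype σ] : (σ → K) →ₗ[K] MvPolynomial σ K where
  toFun v := ∑ i, C (v i) * X i
  map_add' v w := by simp only [Pi.add_apply, map_add, add_mul, Finset.sum_add_distrib]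
  map_smul' t v := by simp [Finset.smul_sum, smul_eq_C_mul, mul_assoc]

theorem linearForm_apply [Fintype σ] (v : σ → K) : linearForm v = ∑ i, C (v i) * X i := rfl

theorem linearForm_single [Fintype σ] [DecidableEq σ] (i : σ) :
    linearForm (Pi.single i 1 : σ → K) = X i := by
  simp [linearForm_apply, Pi.single_apply]

/-- `alongLine p f` is `f (x + t • p)`, as a polynomial in `t`. -/
noncomputable def alongLine (p : σ → K) : MvPolynomial σ K →ₐ[K] Polynomial (MvPolynomial σ K) :=
  aeval fun i => Polynomial.C (X i) + p i • Polynomial.X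

theorem alongLine_linearForm [Fintype σ] (p v : σ → K) :
    alongLine p (linearForm v) = Polynomial.C (linearForm v) + (v ⬝ᵥ p) • Polynomial.X := by
  simp [alongLine, linearForm_apply, dotProduct, mul_add, Finset.sum_add_distrib,
    Finset.sum_mul, Algebra.smul_def, mul_assoc]

theorem prod_map_X_eq_monomial [DecidableEq σ] (s : Multiset σ) :
    (s.map X).prod = monomial (Multiset.toFinsupp s) (1 : K) := by
  induction s using Multiset.induction_on with
  | empty => simp
  | cons i s ih =>
    rw [Multiset.map_cons, Multiset.prod_cons, ih, ← Multiset.singleton_add,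
      Multiset.toFinsupp_add, Multiset.toFinsupp_singleton, monomial_single_add, pow_one]

end LinearForm

section Field

variable {K σ : Type*} [Field K] [Fintype σ]

theorem prod_mem_span_pow_of_eq_sum_pow {ι κ : Type*} [Fintype ι] [DecidableEq ι] [Fintype κ]
    {a : ι → σ → K} {b : κ → σ → K} {c : κ → K}
    (h : ∏ j, linearForm (a j) = ∑ m, c m • linearForm (b m) ^ Fintype.card ι)
    {U : Finset ι} {p : σ → K} (hU : ∀ j ∈ U, a j ⬝ᵥ p = 0) (hUc : ∀ j ∉ U, a j ⬝ᵥ p ≠ 0) :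
    ∏ j ∈ U, linearForm (a j) ∈ span K (range fun m => linearForm (b m) ^ U.card) := by
  have hcoeff_prod : (alongLine p (∏ j, linearForm (a j))).coeff Uᶜ.card
      = (∏ j ∈ Uᶜ, a j ⬝ᵥ p) • ∏ j ∈ U, linearForm (a j) := by
    rw [map_prod, ← Finset.prod_mul_prod_compl U]
    simp only [alongLine_linearForm]
    rw [Finset.prod_congr rfl fun j hj => by rw [hU j hj, zero_smul, add_zero], ← map_prod,
      Polynomial.coeff_C_mul, Polynomial.coeff_prod_C_add_smul_X, Algebra.smul_def, mul_comm]
  have hcoeff_sum : (alongLine p (∑ m, c m • linearForm (b m) ^ Fintype.card ι)).coeff Uᶜ.card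
      = ∑ m, (c m * ((Fintype.card ι).choose Uᶜ.card * (b m ⬝ᵥ p) ^ Uᶜ.card))
        • linearForm (b m) ^ U.card := by
    have hcard : Fintype.card ι - Uᶜ.card = U.card := by
      rw [Finset.card_compl]; have := U.card_le_univ; omega
    simp only [map_sum, map_smul, map_pow, alongLine_linearForm, Polynomial.finsetSum_coeff,
      Polynomial.coeff_smul, Polynomial.coeff_C_add_smul_X_pow, hcard, smul_smul]
  have hne : ∏ j ∈ Uᶜ, a j ⬝ᵥ p ≠ 0 :=
    Finset.prod_ne_zero_iff.mpr fun j hj => hUc j (Finset.mem_compl.mp hj)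
  rw [← inv_smul_smul₀ hne (∏ j ∈ U, linearForm (a j)), ← hcoeff_prod, h, hcoeff_sum]
  exact smul_mem _ _ (sum_mem fun m _ => smul_mem _ _ (subset_span ⟨m, rfl⟩))

theorem prod_mul_prod_X_mem [DecidableEq σ] {ι : Type*} [Fintype ι] [DecidableEq ι]
    {a : ι → σ → K} {W : Submodule K (MvPolynomial σ K)} {d : ℕ}
    (hprod : ∀ U : Finset ι, U.card = d → ∏ j ∈ U, linearForm (a j) ∈ W)
    (hspan : ∀ U : Finset ι, U.card < d → span K (a '' ↑Uᶜ) = ⊤)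
    (s : Multiset σ) (U : Finset ι) (hsU : Multiset.card s + U.card = d) :
    (∏ j ∈ U, linearForm (a j)) * (s.map X).prod ∈ W := by
  induction s using Multiset.induction_on generalizing U with
  | empty => simpa using hprod U (by simpa using hsU)
  | cons i s ih =>
    rw [Multiset.card_cons] at hsU
    let φ := (LinearMap.mulRight K (s.map X).prod).comp
      (LinearMap.mulLeft K (∏ j ∈ U, linearForm (a j)))
    have hφ : span K (a '' ↑Uᶜ) ≤ (W.comap φ).comap linearForm := by
      rw [span_le]
      rintro _ ⟨j, hj, rfl⟩
      have hjU : j ∉ U := Finset.mem_compl.mp hj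
      have := ih (insert j U) (by rw [Finset.card_insert_of_notMem hjU]; omega)
      rw [Finset.prod_insert hjU, mul_comm (linearForm (a j))] at this
      exact this
    have hXi := hφ (hspan U (by omega) ▸ mem_top : Pi.single i 1 ∈ span K (a '' ↑Uᶜ))
    rw [mem_comap, mem_comap, linearForm_single] at hXi
    rw [Multiset.map_cons, Multiset.prod_cons, ← mul_assoc]
    exact hXi

theorem card_sym_le_card_of_forall_mem_span [DecidableEq σ] {κ : Type*} [Fintype κ]
    (v : κ → MvPolynomial σ K) {d : ℕ}
    (h : ∀ s : Sym σ d, ((s : Multiset σ).map (X : σ → MvPolynomial σ K)).prod ∈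
      span K (range v)) :
    Fintype.card (Sym σ d) ≤ Fintype.card κ := by
  have hli : LinearIndependent K
      fun s : Sym σ d => ((s : Multiset σ).map (X : σ → MvPolynomial σ K)).prod := by
    simp_rw [prod_map_X_eq_monomial]
    exact (basisMonomials σ K).linearIndependent.comp _
      fun s t hst => Sym.coe_injective (Multiset.toFinsupp.injective hst)
  calc Fintype.card (Sym σ d)
      = finrank K (span K (range fun s : Sym σ d =>
          ((s : Multiset σ).map (X : σ → MvPolynomial σ K)).prod)) :=
        (finrank_span_eq_card hli).symm
    _ ≤ finrank K (span K (range v)) :=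
        have := FiniteDimensional.span_of_finite K (finite_range v)
        Submodule.finrank_mono (span_le.mpr (range_subset_iff.mpr h))
    _ ≤ Fintype.card κ := finrank_range_le_card v

end Field

theorem Nat.min_choose_le_choose_add_min (r n : ℕ) :
    min (r.choose n) ((2 * n).choose n) ≤ (n + min (r - n) n).choose n := by
  rcases le_total (r - n) n with h | h
  · rw [min_eq_left h]
    rcases le_or_gt n r with hnr | hrn
    · rw [Nat.add_sub_cancel' hnr]
      exact min_le_left _ _
    · simp [Nat.choose_eq_zero_of_lt hrn]
  · rw [min_eq_right h, ← two_mul]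
    exact min_le_right _ _

theorem stmt12_general (K : Type*) [Field K] [CharZero K] (n r : ℕ)
    (a : Fin r → Fin (n + 1) → K)
    (hgen : ∀ s : Finset (Fin r),
      Module.finrank K (Submodule.span K (a '' ↑s)) = min s.card (n + 1)) :
    ∀ (k : ℕ) (c : Fin k → K) (b : Fin k → Fin (n + 1) → K),
      (∏ j, ∑ i, C (a j i) * X i) = ∑ m, c m • (∑ i, C (b m i) * X i) ^ r →
      min (Nat.choose r n) (Nat.choose (2 * n) n) ≤ k := by
  intro k c b heq
  set d := min (r - n) n
  have hgen' : ∀ s : Finset (Fin r),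
      finrank K (span K (a '' s)) = min s.card (finrank K (Fin (n + 1) → K)) := by
    simpa only [Module.finrank_fin_fun] using hgen
  have hprod : ∀ U : Finset (Fin r), U.card = d →
      ∏ j ∈ U, linearForm (a j) ∈ span K (range fun m => linearForm (b m) ^ d) := by
    intro U hU
    obtain ⟨p, hp, hp'⟩ := exists_dotProduct_eq_zero_and_ne_zero fun j hj =>
      notMem_span_image_of_card_lt hgen' (U := U) (by rw [finrank_fin_fun]; omega) hj
    exact hU ▸ prod_mem_span_pow_of_eq_sum_pow (by rwa [Fintype.card_fin]) hp hp'
  have hmonomials : ∀ s : Sym (Fin (n + 1)) d,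
      ((s : Multiset _).map X).prod ∈ span K (range fun m => linearForm (b m) ^ d) := fun s => by
    simpa using prod_mul_prod_X_mem hprod
      (fun U hU => span_image_eq_top_of_le_card hgen'
        (by rw [finrank_fin_fun, Finset.card_compl, Fintype.card_fin]; omega)) s ∅ (by simp)
  calc min (r.choose n) ((2 * n).choose n)
      ≤ (n + d).choose n := Nat.min_choose_le_choose_add_min r n
    _ = Fintype.card (Sym (Fin (n + 1)) d) := by
      rw [Sym.card_sym_eq_choose, Fintype.card_fin, Nat.add_right_comm, Nat.add_sub_cancel,
        Nat.choose_symm_add]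
    _ ≤ Fintype.card (Fin k) := card_sym_le_card_of_forall_mem_span _ hmonomials
    _ = k := Fintype.card_fin k

/-- Waring rank lower bound for a generic arrangement of at least `n+1` hyperplanes:
any Waring decomposition of its defining polynomial uses at least
`min(C(|A|,n), C(2n,n))` powers of linear forms. -/
theorem stmt12 (K : Type*) [Field K] [CharZero K] [IsAlgClosed K] (n r : ℕ)
    (hr : n + 1 ≤ r) (a : Fin r → Fin (n + 1) → K) (ha : ∀ j, a j ≠ 0)
    (hdist : ∀ j j' : Fin r, j ≠ j' → ∀ c : K, a j ≠ c • a j')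
    (hgen : ∀ s : Finset (Fin r),
      Module.finrank K (Submodule.span K (a '' ↑s)) = min s.card (n + 1)) :
    ∀ (k : ℕ) (c : Fin k → K) (b : Fin k → Fin (n + 1) → K),
      (∏ j, ∑ i, C (a j i) * X i) = ∑ m, c m • (∑ i, C (b m i) * X i) ^ r →
      min (Nat.choose r n) (Nat.choose (2 * n) n) ≤ k :=
  stmt12_general K n r a hgen
end

section
/- For the braid-type form f_5 = xyz(x+y+z)(x+y)(y+z) ∈ C[x,y,z], the quadric X² − XY + Y² − YZ + Z² annihilates f_5 under the apolar action; hence the apolar ideal of this irreducible arrangement of six lines has initial degree 2, strictly smaller than the bound min{|A|−n+1, n+1} = 3 valid for generic arrangements. -/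
open MvPolynomial

/-!
The apolar action is bilinear, and on monomials it is `X^m ∘ x^n = (n)_m x^(n-m)` with falling
factorials `(n)_m`, so everything reduces to computing with the eight monomials of
`f₅ = x³y²z + x³yz² + 2x²y³z + 3x²y²z² + xy⁴z + 2xy³z² + x²yz³ + xy²z³`.
For the quadric all contributions cancel. For `Φ = a + b₀X + b₁Y + b₂Z` of degree at
most one, the monomials `x³y²z`, `y⁴z`, `x³z²`, `x³y²` of `Φ ∘ f₅` each receive a single
contribution, with coefficient one, from `a`, `b₀`, `b₁`, `b₂` respectively; so
`Φ ∘ f₅ = 0` forces `Φ = 0`.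
-/

section Apolar

variable {σ K : Type*} [CommRing K]

theorem apol_add_left (Φ Ψ f : MvPolynomial σ K) :
    apol (Φ + Ψ) f = apol Φ f + apol Ψ f := by
  unfold apol
  rw [AddMonoidAlgebra.coeff_add]
  refine Finsupp.sum_add_index' (fun m => ?_) (fun m c₁ c₂ => ?_)
  · simp
  · rw [← Finsupp.sum_add]
    refine Finsupp.sum_congr fun n _ => ?_
    split <;> simp [add_mul]

theorem apol_add_right (Φ f g : MvPolynomial σ K) :
    apol Φ (f + g) = apol Φ f + apol Φ g := by
  unfold apol
  rw [← Finsupp.sum_add]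
  refine Finsupp.sum_congr fun m _ => ?_
  rw [AddMonoidAlgebra.coeff_add]
  refine Finsupp.sum_add_index' (fun n => ?_) (fun n b₁ b₂ => ?_)
  · simp
  · split <;> simp [mul_add, add_mul]

theorem apol_monomial_monomial [Fintype σ] (m n : σ →₀ ℕ) (c b : K) :
    apol (monomial m c) (monomial n b) =
      if m ≤ n then monomial (n - m) (c * b * ∏ i, ((n i).descFactorial (m i) : K)) else 0 := by
  have hprod : ∏ i ∈ m.support, ((n i).descFactorial (m i) : K) =
      ∏ i, ((n i).descFactorial (m i) : K) :=
    m.prod_fintype (fun i k => ((n i).descFactorial k : K)) (by simp)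
  rw [apol, sum_monomial_eq, sum_monomial_eq, hprod]
  · exact if_congr (Finsupp.le_iff m n).symm rfl rfl
  · split <;> simp
  · simp

end Apolar

theorem Finsupp.exists_eq_single_of_degree_eq_one {σ : Type*} {m : σ →₀ ℕ}
    (h : m.degree = 1) : ∃ i, m = Finsupp.single i 1 := by
  obtain ⟨i, hi⟩ := Multiset.card_eq_one.mp ((Finsupp.card_toMultiset m).trans h)
  classical
  exact ⟨i, by rw [← Multiset.toFinsupp_eq_iff.mpr hi.symm, Multiset.toFinsupp_singleton]⟩

theorem MvPolynomial.eq_monomial_zero_add_sum_of_totalDegree_le_one {σ K : Type*} [CommRing K]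
    [Fintype σ] [DecidableEq σ] {Φ : MvPolynomial σ K} (h : Φ.totalDegree ≤ 1) :
    Φ = monomial 0 (coeff 0 Φ) +
      ∑ i, monomial (Finsupp.single i 1) (coeff (Finsupp.single i 1) Φ) := by
  ext m
  simp only [coeff_add, coeff_sum, coeff_monomial]
  by_cases h0 : m = 0
  · subst h0; simp
  by_cases h1 : m.degree = 1
  · obtain ⟨i, rfl⟩ := Finsupp.exists_eq_single_of_degree_eq_one h1
    simp [Finsupp.single_left_inj, Ne.symm h0]
  · have hm : coeff m Φ = 0 := by
      refine coeff_eq_zero_of_totalDegree_lt ?_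
      have := (Finsupp.degree_eq_zero_iff m).not.mpr h0
      rw [← Finsupp.degree_apply]
      omega
    rw [hm, if_neg (Ne.symm h0), zero_add]
    refine (Finset.sum_eq_zero fun i _ => if_neg ?_).symm
    rintro rfl
    simp at h1

section Ternary

noncomputable def multideg (a b c : ℕ) : Fin 3 →₀ ℕ :=
  Finsupp.single 0 a + Finsupp.single 1 b + Finsupp.single 2 c

@[simp] theorem multideg_apply_zero (a b c : ℕ) : multideg a b c 0 = a := by simp [multideg]

@[simp] theorem multideg_apply_one (a b c : ℕ) : multideg a b c 1 = b := by simp [multideg]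

@[simp] theorem multideg_apply_two (a b c : ℕ) : multideg a b c 2 = c := by simp [multideg]

theorem multideg_le_multideg_iff {a b c a' b' c' : ℕ} :
    multideg a b c ≤ multideg a' b' c' ↔ a ≤ a' ∧ b ≤ b' ∧ c ≤ c' := by
  simp [Finsupp.le_def, Fin.forall_fin_succ]

theorem multideg_sub_multideg (a b c a' b' c' : ℕ) :
    multideg a b c - multideg a' b' c' = multideg (a - a') (b - b') (c - c') := by
  ext i
  fin_cases i <;> simp

theorem multideg_inj {a b c a' b' c' : ℕ} :
    multideg a b c = multideg a' b' c' ↔ a = a' ∧ b = b' ∧ c = c' := by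
  simp [Finsupp.ext_iff, Fin.forall_fin_succ]

variable {K : Type*} [CommRing K]

theorem apol_monomial_multideg (p q r u v w : ℕ) (c b : K) :
    apol (monomial (multideg p q r) c) (monomial (multideg u v w) b) =
      if p ≤ u ∧ q ≤ v ∧ r ≤ w then
        monomial (multideg (u - p) (v - q) (w - r))
          (c * b * ((u.descFactorial p : K) * v.descFactorial q * w.descFactorial r))
      else 0 := by
  simp only [apol_monomial_monomial, multideg_le_multideg_iff, multideg_sub_multideg,
    Fin.prod_univ_three, multideg_apply_zero, multideg_apply_one, multideg_apply_two]

theorem monomial_multideg (a b c : ℕ) (k : K) :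
    monomial (multideg a b c) k = C k * X 0 ^ a * X 1 ^ b * X 2 ^ c := by
  simp only [multideg, X_pow_eq_monomial, C_apply, monomial_mul, mul_one, zero_add]

theorem eq_of_totalDegree_le_one_ternary {Φ : MvPolynomial (Fin 3) K} (h : Φ.totalDegree ≤ 1) :
    Φ = monomial (multideg 0 0 0) (coeff (multideg 0 0 0) Φ)
      + monomial (multideg 1 0 0) (coeff (multideg 1 0 0) Φ)
      + monomial (multideg 0 1 0) (coeff (multideg 0 1 0) Φ)
      + monomial (multideg 0 0 1) (coeff (multideg 0 0 1) Φ) := by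
  have := eq_monomial_zero_add_sum_of_totalDegree_le_one h
  simp only [Fin.sum_univ_three] at this
  simpa [multideg, add_assoc] using this

end Ternary

section Braid

variable (K : Type*) [CommRing K]

noncomputable def braidForm : MvPolynomial (Fin 3) K :=
  X 0 * X 1 * X 2 * (X 0 + X 1 + X 2) * (X 0 + X 1) * (X 1 + X 2)

noncomputable def braidQuadric : MvPolynomial (Fin 3) K :=
  X 0 ^ 2 - X 0 * X 1 + X 1 ^ 2 - X 1 * X 2 + X 2 ^ 2

theorem braidForm_eq_sum_monomial : braidForm K =
    monomial (multideg 3 2 1) 1 + monomial (multideg 3 1 2) 1 + monomial (multideg 2 3 1) 2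
      + monomial (multideg 2 2 2) 3 + monomial (multideg 1 4 1) 1 + monomial (multideg 1 3 2) 2
      + monomial (multideg 2 1 3) 1 + monomial (multideg 1 2 3) 1 := by
  simp only [braidForm, monomial_multideg, map_one, map_ofNat]
  ring

theorem braidQuadric_eq_sum_monomial : braidQuadric K =
    monomial (multideg 2 0 0) 1 + monomial (multideg 1 1 0) (-1) + monomial (multideg 0 2 0) 1
      + monomial (multideg 0 1 1) (-1) + monomial (multideg 0 0 2) 1 := by
  simp only [braidQuadric, monomial_multideg, map_one, map_neg]
  ring

theorem apol_braidQuadric_braidForm : apol (braidQuadric K) (braidForm K) = 0 := by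
  rw [braidQuadric_eq_sum_monomial, braidForm_eq_sum_monomial]
  simp only [apol_add_left, apol_add_right, apol_monomial_multideg]
  norm_num [Nat.descFactorial]
  simp only [monomial_multideg, map_ofNat]
  ring

theorem eq_zero_of_totalDegree_lt_two_of_apol_braidForm {Φ : MvPolynomial (Fin 3) K}
    (hdeg : Φ.totalDegree < 2) (h : apol Φ (braidForm K) = 0) : Φ = 0 := by
  have hΦ := eq_of_totalDegree_le_one_ternary (Nat.le_of_lt_succ hdeg)
  rw [hΦ, braidForm_eq_sum_monomial] at h
  simp only [apol_add_left, apol_add_right, apol_monomial_multideg] at h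
  norm_num [Nat.descFactorial] at h
  have hconst := congrArg (coeff (multideg 3 2 1)) h
  have hX0 := congrArg (coeff (multideg 0 4 1)) h
  have hX1 := congrArg (coeff (multideg 3 0 2)) h
  have hX2 := congrArg (coeff (multideg 3 2 0)) h
  simp only [coeff_add, coeff_monomial, multideg_inj, coeff_zero] at hconst hX0 hX1 hX2
  norm_num at hconst hX0 hX1 hX2
  rw [hΦ, hconst, hX0, hX1, hX2]
  simp

theorem braidQuadric_ne_zero [Nontrivial K] : braidQuadric K ≠ 0 := fun h => by
  simpa [braidQuadric] using congrArg (eval ![1, 0, 0]) h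

theorem totalDegree_braidQuadric [Nontrivial K] : (braidQuadric K).totalDegree = 2 := by
  refine IsHomogeneous.totalDegree ?_ (braidQuadric_ne_zero K)
  have hX := isHomogeneous_X K (σ := Fin 3)
  exact (((((hX 0).pow 2).sub ((hX 0).mul (hX 1))).add ((hX 1).pow 2)).sub
    ((hX 1).mul (hX 2))).add ((hX 2).pow 2)

end Braid

/-- The quadric `X² − XY + Y² − YZ + Z²` annihilates the braid-type form
`f₅ = xyz(x+y+z)(x+y)(y+z)`, and nothing of degree < 2 does; hence the apolar ideal of
this irreducible arrangement of six lines has initial degree 2, strictly smaller than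
the bound `min(|A|−n+1, n+1) = min(6−2+1, 2+1) = 3` valid for generic arrangements. -/
theorem stmt19 :
    let f₅ : MvPolynomial (Fin 3) ℂ :=
      X 0 * X 1 * X 2 * (X 0 + X 1 + X 2) * (X 0 + X 1) * (X 1 + X 2)
    let Q : MvPolynomial (Fin 3) ℂ :=
      X 0 ^ 2 - X 0 * X 1 + X 1 ^ 2 - X 1 * X 2 + X 2 ^ 2
    apol Q f₅ = 0 ∧ Q ≠ 0 ∧ Q.totalDegree = 2 ∧
    (∀ Φ : MvPolynomial (Fin 3) ℂ, Φ.totalDegree < 2 → apol Φ f₅ = 0 → Φ = 0) ∧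
    (2 : ℕ) < min (6 - 2 + 1) (2 + 1) :=
  ⟨apol_braidQuadric_braidForm ℂ, braidQuadric_ne_zero ℂ, totalDegree_braidQuadric ℂ,
    fun _ => eq_zero_of_totalDegree_lt_two_of_apol_braidForm ℂ, by norm_num⟩
end
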